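/- Let 0 < q < 1 and φ ∈ ℝ. In Pol(ℂ)_q (relation z*z = q⁴zz* + 1 − q⁴), the Fock representation ρ_F(z) = C₄S on ℓ²(ℤ≥0) dominates in norm the one-dimensional representations: for every *-polynomial p in z, |ρ_φ(p)| ≤ ‖ρ_F(p)‖, where ρ_φ(z) = e^{iφ}. -/

import Mathlib

noncomputable section
open ContinuousLinearMap Complex

/-- ℓ²(ℤ≥0) -/
abbrev H : Type := lp (fun _ : ℕ => ℂ) 2

/-- standard orthonormal basis vector e_k -/
def e (k : ℕ) : H := lp.single 2 k 1

/-!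
With `ζ = e^{iφ}`, the normalised windows `v_N = N^{-1/2} ∑_{j<N} ζ^{-j} e_{N+j}` are approximate
eigenvectors of `S` for `ζ` and of `S*` for `ζ⁻¹`, because a shift only disturbs the two ends of
the window; and of the diagonal operator `C₄` for `1`, because its entries tend to `1` and the
windows move off to infinity. Being an approximate eigenvector sequence is stable under sums and
products of operators, so `ρ_F(p) v_N - ρ_φ(p) v_N → 0` for every `p`, and since `‖v_N‖ = 1` this
forces `|ρ_φ(p)| ≤ ‖ρ_F(p)‖`.
-/

open Filter Topology
open scoped InnerProductSpace

section ApproxEigen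

variable {𝕜 E : Type*} [NontriviallyNormedField 𝕜] [NormedAddCommGroup E] [NormedSpace 𝕜 E]

def IsApproxEigenseq (T : E →L[𝕜] E) (c : 𝕜) (v : ℕ → E) : Prop :=
  Tendsto (fun n ↦ T (v n) - c • v n) atTop (𝓝 0)

namespace IsApproxEigenseq

variable {T T' : E →L[𝕜] E} {c c' : 𝕜} {v : ℕ → E}

theorem algebraMap (r : 𝕜) (v : ℕ → E) :
    IsApproxEigenseq (algebraMap 𝕜 (E →L[𝕜] E) r) r v := by
  simp [IsApproxEigenseq, Algebra.algebraMap_eq_smul_one]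

theorem add (h : IsApproxEigenseq T c v) (h' : IsApproxEigenseq T' c' v) :
    IsApproxEigenseq (T + T') (c + c') v := by
  simpa only [IsApproxEigenseq, add_apply, add_smul, add_sub_add_comm, add_zero] using
    Tendsto.add h h'

theorem mul (h : IsApproxEigenseq T c v) (h' : IsApproxEigenseq T' c' v) :
    IsApproxEigenseq (T * T') (c * c') v := by
  have hT : Tendsto (fun n ↦ T (T' (v n) - c' • v n)) atTop (𝓝 0) := by
    simpa only [map_zero, Function.comp_def] using (T.continuous.tendsto 0).comp h'
  have key : ∀ n, (T * T') (v n) - (c * c') • v n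
      = T (T' (v n) - c' • v n) + c' • (T (v n) - c • v n) := fun n ↦ by
    simp only [mul_apply_eq_comp, map_sub, map_smul, smul_sub, smul_smul, mul_comm c c']
    abel
  simpa only [IsApproxEigenseq, key, smul_zero, add_zero] using hT.add (Tendsto.const_smul h c')

theorem norm_le_opNorm (h : IsApproxEigenseq T c v) (hv : ∀ᶠ n in atTop, ‖v n‖ = 1) :
    ‖c‖ ≤ ‖T‖ := by
  have hlim : Tendsto (fun n ↦ ‖T‖ + ‖T (v n) - c • v n‖) atTop (𝓝 ‖T‖) := by
    simpa using h.norm.const_add ‖T‖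
  refine ge_of_tendsto hlim ?_
  filter_upwards [hv] with n hn
  calc ‖c‖ = ‖c • v n‖ := by rw [norm_smul, hn, mul_one]
    _ ≤ ‖T (v n)‖ + ‖T (v n) - c • v n‖ := norm_le_insert _ _
    _ ≤ ‖T‖ + ‖T (v n) - c • v n‖ := by
      gcongr
      simpa [hn] using T.le_opNorm (v n)

end IsApproxEigenseq

theorem FreeAlgebra.isApproxEigenseq_lift {X : Type*} {f : X → E →L[𝕜] E} {g : X → 𝕜}
    {v : ℕ → E} (h : ∀ x, IsApproxEigenseq (f x) (g x) v) (p : FreeAlgebra 𝕜 X) :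
    IsApproxEigenseq (FreeAlgebra.lift 𝕜 f p) (FreeAlgebra.lift 𝕜 g p) v := by
  induction p using FreeAlgebra.induction with
  | grade0 r => simpa using IsApproxEigenseq.algebraMap r v
  | grade1 x => simpa using h x
  | mul a b ha hb => simpa using ha.mul hb
  | add a b ha hb => simpa using ha.add hb

end ApproxEigen

theorem Orthonormal.norm_sum_smul_sq {𝕜 E ι : Type*} [RCLike 𝕜] [NormedAddCommGroup E]
    [InnerProductSpace 𝕜 E] {v : ι → E} (hv : Orthonormal 𝕜 v) (a : ι → 𝕜) (s : Finset ι) :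
    ‖∑ i ∈ s, a i • v i‖ ^ 2 = ∑ i ∈ s, ‖a i‖ ^ 2 := by
  simpa using hv.orthogonalFamily.norm_sum a s

theorem orthonormal_e : Orthonormal ℂ e := by
  rw [orthonormal_iff_ite]
  intro i j
  simp [e, lp.inner_single_left, lp.single_apply, Pi.single_apply]

theorem inner_e (j k : ℕ) : ⟪e j, e k⟫_ℂ = if j = k then 1 else 0 :=
  orthonormal_iff_ite.1 orthonormal_e j k

theorem inner_e_left (k : ℕ) (x : H) : ⟪e k, x⟫_ℂ = x k := by
  simp [e, lp.inner_single_left]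

theorem ext_inner_e {x y : H} (h : ∀ k, ⟪e k, x⟫_ℂ = ⟪e k, y⟫_ℂ) : x = y :=
  lp.ext (funext fun k ↦ by simpa [inner_e_left] using h k)

def window (ζ : ℂ) (N : ℕ) : H := ((√N)⁻¹ : ℂ) • ∑ j ∈ Finset.range N, ζ⁻¹ ^ j • e (N + j)

theorem norm_sq_sum_smul_e_add (N : ℕ) (a : ℕ → ℂ) (s : Finset ℕ) :
    ‖∑ j ∈ s, a j • e (N + j)‖ ^ 2 = ∑ j ∈ s, ‖a j‖ ^ 2 :=
  (orthonormal_e.comp _ (add_right_injective N)).norm_sum_smul_sq a s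

theorem norm_window {ζ : ℂ} (hζ : ‖ζ‖ = 1) {N : ℕ} (hN : N ≠ 0) : ‖window ζ N‖ = 1 := by
  have hsq : ‖∑ j ∈ Finset.range N, ζ⁻¹ ^ j • e (N + j)‖ ^ 2 = N := by
    simp [norm_sq_sum_smul_e_add, hζ]
  rw [window, norm_smul, ← Real.sqrt_sq (norm_nonneg (∑ j ∈ _, _)), hsq, norm_inv,
    norm_real, Real.norm_eq_abs, abs_of_nonneg (by positivity), inv_mul_cancel₀]
  positivity

theorem eventually_norm_window {ζ : ℂ} (hζ : ‖ζ‖ = 1) : ∀ᶠ N in atTop, ‖window ζ N‖ = 1 := by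
  filter_upwards [eventually_ne_atTop 0] with N hN using norm_window hζ hN

theorem norm_inv_sqrt_smul_sum_smul_e_le {N : ℕ} {a : ℕ → ℂ} {ε : ℝ} (hε : 0 ≤ ε)
    (ha : ∀ j < N, ‖a j‖ ≤ ε) :
    ‖((√N)⁻¹ : ℂ) • ∑ j ∈ Finset.range N, a j • e (N + j)‖ ≤ ε := by
  rcases eq_or_ne N 0 with rfl | hN
  · simpa using hε
  have hsum : ‖∑ j ∈ Finset.range N, a j • e (N + j)‖ ≤ √N * ε := by
    rw [← pow_le_pow_iff_left₀ (norm_nonneg _) (by positivity) two_ne_zero,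
      norm_sq_sum_smul_e_add, mul_pow, Real.sq_sqrt (Nat.cast_nonneg N)]
    simpa using Finset.sum_le_sum fun j hj ↦
      pow_le_pow_left₀ (norm_nonneg _) (ha j (Finset.mem_range.1 hj)) 2
  rw [norm_smul, norm_inv, norm_real, Real.norm_of_nonneg (Real.sqrt_nonneg _)]
  calc (√N)⁻¹ * ‖∑ j ∈ Finset.range N, a j • e (N + j)‖ ≤ (√N)⁻¹ * (√N * ε) := by gcongr
    _ = ε := inv_mul_cancel_left₀ (by positivity) ε

theorem norm_pow_smul_e {ζ : ℂ} (hζ : ‖ζ‖ = 1) (j k : ℕ) : ‖ζ ^ j • e k‖ = 1 := by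
  rw [norm_smul, norm_pow, hζ, one_pow, one_mul, orthonormal_e.norm_eq_one]

theorem tendsto_inv_sqrt_natCast_atTop_nhds_zero : Tendsto (fun N : ℕ ↦ (√N)⁻¹) atTop (𝓝 0) :=
  tendsto_inv_atTop_zero.comp (Real.tendsto_sqrt_atTop.comp tendsto_natCast_atTop_atTop)

theorem isApproxEigenseq_window_of_bounded {T : H →L[ℂ] H} {c ζ : ℂ} (C : ℝ)
    (hC : ∀ N, ‖T (∑ j ∈ Finset.range N, ζ⁻¹ ^ j • e (N + j))
      - c • ∑ j ∈ Finset.range N, ζ⁻¹ ^ j • e (N + j)‖ ≤ C) :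
    IsApproxEigenseq T c (window ζ) := by
  refine squeeze_zero_norm (fun N ↦ ?_)
    (by simpa using tendsto_inv_sqrt_natCast_atTop_nhds_zero.mul_const C)
  rw [window, map_smul, smul_comm c, ← smul_sub, norm_smul, norm_inv, norm_real,
    Real.norm_of_nonneg (Real.sqrt_nonneg _)]
  exact mul_le_mul_of_nonneg_left (hC N) (by positivity)

theorem isApproxEigenseq_window_of_shift {A : H →L[ℂ] H} (hA : ∀ k, A (e k) = e (k + 1))
    {ζ : ℂ} (hζ : ‖ζ‖ = 1) : IsApproxEigenseq A ζ (window ζ) := by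
  have hζ0 : ζ ≠ 0 := norm_ne_zero_iff.1 (by rw [hζ]; exact one_ne_zero)
  refine isApproxEigenseq_window_of_bounded 2 fun N ↦ ?_
  set x : ℕ → H := fun j ↦ ζ⁻¹ ^ j • e (N + j)
  have hx : ∀ j, ‖x j‖ = 1 := fun j ↦ norm_pow_smul_e (by rwa [norm_inv, inv_eq_one]) j _
  have hAx : ∀ j, A (x j) = ζ • x (j + 1) := fun j ↦ by
    simp only [x, map_smul, hA, smul_smul, pow_succ, mul_comm ζ, ← add_assoc]
    rw [mul_assoc, inv_mul_cancel₀ hζ0, mul_one]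
  have htel : A (∑ j ∈ Finset.range N, x j) - ζ • ∑ j ∈ Finset.range N, x j
      = ζ • (x N - x 0) := by
    rw [map_sum, ← Finset.sum_range_sub, Finset.smul_sum, Finset.smul_sum,
      ← Finset.sum_sub_distrib]
    simp only [hAx, smul_sub]
  calc _ = ‖ζ • (x N - x 0)‖ := congrArg norm htel
    _ ≤ ‖x N‖ + ‖x 0‖ := by rw [norm_smul, hζ, one_mul]; exact norm_sub_le _ _
    _ = 2 := by rw [hx, hx]; norm_num

theorem isApproxEigenseq_window_of_backwardShift {B : H →L[ℂ] H}
    (hB : ∀ k, B (e (k + 1)) = e k) {ζ : ℂ} (hζ : ‖ζ‖ = 1) :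
    IsApproxEigenseq B ζ⁻¹ (window ζ) := by
  refine isApproxEigenseq_window_of_bounded (‖B‖ + 1) fun N ↦ ?_
  set x : ℕ → H := fun j ↦ ζ⁻¹ ^ j • e (N + j)
  have hx : ∀ j, ‖x j‖ = 1 := fun j ↦ norm_pow_smul_e (by rwa [norm_inv, inv_eq_one]) j _
  have hBx : ∀ j, B (x (j + 1)) = ζ⁻¹ • x j := fun j ↦ by
    simp only [x, map_smul, ← add_assoc, hB, smul_smul, pow_succ']
  rcases N with _ | n
  · simpa using add_nonneg (norm_nonneg B) zero_le_one
  · have htel : B (∑ j ∈ Finset.range (n + 1), x j) - ζ⁻¹ • ∑ j ∈ Finset.range (n + 1), x j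
        = B (x 0) - ζ⁻¹ • x n := by
      rw [map_sum, Finset.sum_range_succ', Finset.sum_range_succ, smul_add, Finset.smul_sum]
      simp only [hBx]
      abel
    calc _ = ‖B (x 0) - ζ⁻¹ • x n‖ := congrArg norm htel
      _ ≤ ‖B (x 0)‖ + ‖ζ⁻¹ • x n‖ := norm_sub_le _ _
      _ ≤ ‖B‖ * ‖x 0‖ + ‖ζ⁻¹‖ * ‖x n‖ := by
        rw [norm_smul]
        gcongr
        exact B.le_opNorm _
      _ = ‖B‖ + 1 := by simp [hx, hζ]

theorem isApproxEigenseq_window_of_diagonal {D : H →L[ℂ] H} {d : ℕ → ℂ}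
    (hD : ∀ k, D (e k) = d k • e k) (hd : Tendsto d atTop (𝓝 1)) {ζ : ℂ} (hζ : ‖ζ‖ = 1) :
    IsApproxEigenseq D 1 (window ζ) := by
  rw [IsApproxEigenseq, Metric.tendsto_atTop]
  intro ε hε
  obtain ⟨K, hK⟩ := Metric.tendsto_atTop.1 hd (ε / 2) (half_pos hε)
  refine ⟨K, fun N hN ↦ ?_⟩
  have hdefect : D (window ζ N) - (1 : ℂ) • window ζ N
      = ((√N)⁻¹ : ℂ) • ∑ j ∈ Finset.range N, (ζ⁻¹ ^ j * (d (N + j) - 1)) • e (N + j) := by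
    rw [one_smul, window, map_smul, ← smul_sub, map_sum, ← Finset.sum_sub_distrib]
    congr 1
    refine Finset.sum_congr rfl fun j _ ↦ ?_
    rw [map_smul, hD, smul_smul, mul_sub, mul_one, sub_smul]
  rw [dist_zero_right, hdefect]
  refine (norm_inv_sqrt_smul_sum_smul_e_le (half_pos hε).le fun j _ ↦ ?_).trans_lt
    (half_lt_self hε)
  rw [norm_mul, norm_pow, norm_inv, hζ, inv_one, one_pow, one_mul, ← dist_eq_norm]
  exact (hK (N + j) (by omega)).le

theorem adjoint_apply_e_of_diagonal {D : H →L[ℂ] H} {d : ℕ → ℂ}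
    (hD : ∀ k, D (e k) = d k • e k) (k : ℕ) : adjoint D (e k) = starRingEnd ℂ (d k) • e k :=
  ext_inner_e fun j ↦ by
    rw [adjoint_inner_right, hD, inner_smul_left, inner_smul_right, inner_e]
    split_ifs with h <;> simp [h]

theorem adjoint_apply_e_succ_of_shift {A : H →L[ℂ] H} (hA : ∀ k, A (e k) = e (k + 1))
    (k : ℕ) : adjoint A (e (k + 1)) = e k :=
  ext_inner_e fun j ↦ by simp [adjoint_inner_right, hA, inner_e]

theorem tendsto_sqrt_one_sub_pow {r : ℝ} (h0 : 0 ≤ r) (h1 : r < 1) :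
    Tendsto (fun k : ℕ ↦ ((√(1 - r ^ k) : ℝ) : ℂ)) atTop (𝓝 1) := by
  have hcont : Continuous fun x : ℝ ↦ ((√(1 - x) : ℝ) : ℂ) := by fun_prop
  simpa [Function.comp_def] using
    (hcont.tendsto 0).comp (tendsto_pow_atTop_nhds_zero_of_lt_one h0 h1)

/-- Every *-polynomial p in z (an element of the free algebra on the two symbols z, z*)
satisfies |ρ_φ(p)| ≤ ‖ρ_F(p)‖, where ρ_F(z) = C₄S and ρ_φ(z) = e^{iφ}. -/
theorem stmt16 (q : ℝ) (hq : 0 < q) (hq1 : q < 1) (φ : ℝ)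
    (S C4 : H →L[ℂ] H)
    (hS : ∀ k, S (e k) = e (k + 1))
    (hC4 : ∀ k, C4 (e k) = ((Real.sqrt (1 - q ^ (4 * k)) : ℝ) : ℂ) • e k)
    (f : Bool → (H →L[ℂ] H))
    (hf : f true = C4 ∘L S) (hf' : f false = adjoint (C4 ∘L S))
    (g : Bool → ℂ)
    (hg : g true = Complex.exp (φ * Complex.I))
    (hg' : g false = Complex.exp (-(φ * Complex.I))) :
    ∀ p : FreeAlgebra ℂ Bool,
      ‖FreeAlgebra.lift ℂ g p‖ ≤ ‖FreeAlgebra.lift ℂ f p‖ := by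
  set ζ := Complex.exp (φ * Complex.I)
  have hζ : ‖ζ‖ = 1 := norm_exp_ofReal_mul_I φ
  have hd : Tendsto (fun k : ℕ ↦ ((√(1 - q ^ (4 * k)) : ℝ) : ℂ)) atTop (𝓝 1) := by
    simpa only [pow_mul] using
      tendsto_sqrt_one_sub_pow (pow_nonneg hq.le 4) (pow_lt_one₀ hq.le hq1 four_ne_zero)
  have hC4adj : ∀ k, adjoint C4 (e k) = ((√(1 - q ^ (4 * k)) : ℝ) : ℂ) • e k := fun k ↦ by
    rw [adjoint_apply_e_of_diagonal hC4, conj_ofReal]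
  have hgen : ∀ b, IsApproxEigenseq (f b) (g b) (window ζ) := by
    rintro (_ | _)
    · rw [hf', hg', adjoint_comp, exp_neg, ← mul_def]
      simpa only [mul_one] using
        (isApproxEigenseq_window_of_backwardShift (adjoint_apply_e_succ_of_shift hS) hζ).mul
          (isApproxEigenseq_window_of_diagonal hC4adj hd hζ)
    · rw [hf, hg, ← mul_def]
      simpa only [one_mul] using (isApproxEigenseq_window_of_diagonal hC4 hd hζ).mul
        (isApproxEigenseq_window_of_shift hS hζ)
  exact fun p ↦ (FreeAlgebra.isApproxEigenseq_lift hgen p).norm_le_opNorm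
    (eventually_norm_window hζ)
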